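/- Let G be a connected graph on n ≥ 2 vertices. For a real number α, let (^α m)_i = (Σ_{j∼i} d_jᵅ)/d_iᵅ be the generalized average degrees, assumed ordered (^α m)₁ ≥ ... ≥ (^α m)_n, and let N = max_{i∼j} d_jᵅ/d_iᵅ. Then for each 1 ≤ i ≤ n, ρ(A(G)) ≤ ((^α m)_i − N + √(((^α m)_i + N)² + 4N·Σ_{k=1}^{i−1}((^α m)_k − (^α m)_i)))/2. -/

import Mathlib

/-!
Let `μ` be an eigenvalue of `A(G)` with eigenvector `v`, `r = ‖μ‖` and `y_k = ‖v_k‖ / d_kᵅ`. Then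
`r • y ≤ C *ᵥ y` for `C = D⁻ᵅ A Dᵅ`, a nonnegative matrix with zero diagonal, entries at most `N`
and row sums `m_j`. List the values of `y` decreasingly as `w_0 ≥ w_1 ≥ ⋯`, `w_t = y_{σ t}`. Row
`σ t` of `r • y ≤ C *ᵥ y` gives `r w_t ≤ m_{σ t} w_i + N ∑_{u < i, u ≠ t} (w_u - w_i)`. Summing
these rows over the ranks `t < i` and adding `r - (i - 1) N` times the row of a rank `t ≤ i` with
`σ t ≥ i` eliminates `∑_{u < i} w_u` and leaves `(r + N)(r - m_i) ≤ N ∑_{k < i} (m_k - m_i)`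
whenever `r ≥ (i - 1) N`; for smaller `r` this inequality is inherited from `i - 1`. Its larger
root is the claimed bound.
-/

open Matrix Finset Real

/-- Spectral radius: largest modulus of a complex eigenvalue (root of the
characteristic polynomial). -/
noncomputable def specRad {n : ℕ} (A : Matrix (Fin n) (Fin n) ℝ) : ℝ :=
  (((A.map (Complex.ofReal)).charpoly.roots).map (fun z => ‖z‖)).foldr max 0

/-- Irreducibility of a nonnegative matrix. -/
def Irred {n : ℕ} (A : Matrix (Fin n) (Fin n) ℝ) : Prop :=
  ∀ i j : Fin n, ∃ k : ℕ, 0 < (A ^ k) i j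

theorem Matrix.exists_mulVec_eq_smul_of_mem_roots_charpoly {ι K : Type*} [Fintype ι]
    [DecidableEq ι] [Field K] {M : Matrix ι ι K} {μ : K} (h : μ ∈ M.charpoly.roots) :
    ∃ v ≠ 0, M *ᵥ v = μ • v := by
  have hdet : (scalar ι μ - M).det = 0 := by
    rw [← eval_charpoly]
    exact (Polynomial.mem_roots M.charpoly_monic.ne_zero).mp h
  obtain ⟨v, hv0, hv⟩ := exists_mulVec_eq_zero_iff.mpr hdet
  refine ⟨v, hv0, ?_⟩
  rw [sub_mulVec, sub_eq_zero, scalar_apply] at hv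
  rw [← hv]
  ext i
  simp [mulVec_diagonal]

theorem Multiset.foldr_max_le {α : Type*} [LinearOrder α] {s : Multiset α} {a b : α}
    (ha : a ≤ b) (h : ∀ x ∈ s, x ≤ b) : s.foldr max a ≤ b := by
  induction s using Multiset.induction_on with
  | empty => simpa
  | cons x s ih =>
    rw [Multiset.foldr_cons]
    exact max_le (h x (s.mem_cons_self x)) (ih fun y hy => h y (Multiset.mem_cons_of_mem hy))

theorem specRad_le {n : ℕ} {A : Matrix (Fin n) (Fin n) ℝ} {B : ℝ} (hB : 0 ≤ B)
    (h : ∀ (μ : ℂ) (v : Fin n → ℂ), v ≠ 0 → A.map Complex.ofReal *ᵥ v = μ • v → ‖μ‖ ≤ B) :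
    specRad A ≤ B := by
  refine Multiset.foldr_max_le hB fun x hx => ?_
  obtain ⟨μ, hμ, rfl⟩ := Multiset.mem_map.mp hx
  obtain ⟨v, hv0, hv⟩ := exists_mulVec_eq_smul_of_mem_roots_charpoly hμ
  exact h μ v hv0 hv

theorem Matrix.norm_smul_le_mulVec_norm {ι : Type*} [Fintype ι] {A : Matrix ι ι ℝ}
    (hA : ∀ i j, 0 ≤ A i j) {μ : ℂ} {v : ι → ℂ} (h : A.map Complex.ofReal *ᵥ v = μ • v) :
    ‖μ‖ • (fun i => ‖v i‖) ≤ A *ᵥ fun i => ‖v i‖ := by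
  intro i
  calc ‖μ‖ * ‖v i‖ = ‖∑ j, (A i j : ℂ) * v j‖ := by
        rw [← norm_mul, ← smul_eq_mul, ← Pi.smul_apply, ← h]; rfl
    _ ≤ ∑ j, ‖(A i j : ℂ) * v j‖ := norm_sum_le _ _
    _ = ∑ j, A i j * ‖v j‖ := by
        simp only [norm_mul, Complex.norm_real, Real.norm_of_nonneg (hA i _)]

theorem Antitone.sum_le_sum_Iio {ι : Type*} [LinearOrder ι] [LocallyFiniteOrderBot ι]
    {f : ι → ℝ} (hf : Antitone f) {s : Finset ι} {i : ι} (hs : #s = #(Iio i)) :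
    ∑ k ∈ s, f k ≤ ∑ k ∈ Iio i, f k := by
  have hcard : #(s \ Iio i) = #(Iio i \ s) := card_sdiff_eq_card_sdiff_iff.mpr hs
  have hout : ∑ k ∈ s \ Iio i, f k ≤ #(s \ Iio i) • f i :=
    sum_le_card_nsmul _ _ _ fun k hk => hf (not_lt.mp (mem_Iio.not.mp (mem_sdiff.mp hk).2))
  have hin : #(Iio i \ s) • f i ≤ ∑ k ∈ Iio i \ s, f k :=
    card_nsmul_le_sum _ _ _ fun k hk => hf (mem_Iio.mp (mem_sdiff.mp hk).1).le
  have hdiff := sum_sdiff_sub_sum_sdiff (s₁ := s) (s₂ := Iio i) (f := f)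
  rw [hcard] at hout
  linarith

theorem Equiv.Perm.exists_le_le_apply {ι : Type*} [LinearOrder ι] [LocallyFiniteOrderBot ι]
    (σ : Equiv.Perm ι) (i : ι) : ∃ t ≤ i, i ≤ σ t := by
  by_contra! h
  have := card_le_card_of_injOn σ (s := Iic i) (t := Iio i)
    (fun t ht => mem_Iio.mpr (h t (mem_Iic.mp ht))) σ.injective.injOn
  rw [Iic_eq_cons_Iio, card_cons] at this
  omega

theorem sum_mul_le_of_antitone {ι : Type*} [Fintype ι] [LinearOrder ι] [LocallyFiniteOrderBot ι]
    {c w : ι → ℝ} {N : ℝ} (hw : Antitone w) (hc0 : 0 ≤ c) (hcN : ∀ u, c u ≤ N) {t : ι}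
    (hct : c t = 0) (i : ι) :
    ∑ u, c u * w u ≤ (∑ u, c u) * w i + N * ∑ u ∈ (Iio i).erase t, (w u - w i) := by
  have hterm : ∀ u, c u * (w u - w i) ≤ if u ∈ (Iio i).erase t then N * (w u - w i) else 0 := by
    intro u
    split_ifs with hu
    · obtain ⟨-, hu⟩ := mem_erase.mp hu
      exact mul_le_mul_of_nonneg_right (hcN u) (sub_nonneg.mpr (hw (mem_Iio.mp hu).le))
    · rcases eq_or_ne u t with rfl | hut
      · simp [hct]
      · have hiu : i ≤ u := not_lt.mp fun h => hu (mem_erase.mpr ⟨hut, mem_Iio.mpr h⟩)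
        exact mul_nonpos_of_nonneg_of_nonpos (hc0 u) (sub_nonpos.mpr (hw hiu))
  calc ∑ u, c u * w u = (∑ u, c u) * w i + ∑ u, c u * (w u - w i) := by
        rw [sum_mul, ← sum_add_distrib]; exact sum_congr rfl fun u _ => by ring
    _ ≤ (∑ u, c u) * w i + ∑ u, if u ∈ (Iio i).erase t then N * (w u - w i) else 0 := by
        gcongr with u; exact hterm u
    _ = (∑ u, c u) * w i + N * ∑ u ∈ (Iio i).erase t, (w u - w i) := by
        rw [sum_ite_mem, univ_inter, mul_sum]

theorem le_root_of_mul_sub_le {r a N S : ℝ} (h : (r + N) * (r - a) ≤ N * S) :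
    r ≤ (a - N + √((a + N) ^ 2 + 4 * N * S)) / 2 := by
  -- `(2 r + N - a) ^ 2 = (a + N) ^ 2 + 4 (r + N) (r - a)`
  have hsq : (2 * r + N - a) ^ 2 ≤ (a + N) ^ 2 + 4 * N * S := by nlinarith
  have := Real.le_sqrt_of_sq_le hsq
  linarith

theorem mul_sub_le_of_pred {n : ℕ} {m : Fin n → ℝ} {r N : ℝ} (hm : Antitone m) {j i : Fin n}
    (hji : (j : ℕ) + 1 = i) (hr : r ≤ (j : ℕ) * N)
    (hj : (r + N) * (r - m j) ≤ N * ∑ k ∈ Iio j, (m k - m j)) :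
    (r + N) * (r - m i) ≤ N * ∑ k ∈ Iio i, (m k - m i) := by
  have hIio : Iio i = insert j (Iio j) := by
    ext k
    simp only [mem_Iio, mem_insert, Fin.lt_def, Fin.ext_iff]
    omega
  have hsum : ∑ k ∈ Iio i, (m k - m i)
      = ∑ k ∈ Iio j, (m k - m j) + ((j : ℕ) + 1) * (m j - m i) := by
    simp only [sum_sub_distrib, sum_const, Fin.card_Iio, nsmul_eq_mul, ← hji]
    rw [hIio, sum_insert notMem_Iio_self]
    push_cast
    ring
  have hji' : m i ≤ m j := hm (Fin.le_def.mpr (by omega))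
  rw [hsum]
  nlinarith [mul_le_mul_of_nonneg_right (show r + N ≤ ((j : ℕ) + 1) * N by linarith)
    (sub_nonneg.mpr hji')]

section Ranked

variable {n : ℕ} {m w : Fin n → ℝ} {σ : Equiv.Perm (Fin n)} {r N : ℝ}

/-- Row `σ t` of `r • y ≤ C *ᵥ y`, where `w = y ∘ σ` ranks `y` decreasingly, once the entries of `C`
are bounded by `N` on the vertices of rank below `i`. -/
def RankedRowBounds (m w : Fin n → ℝ) (σ : Equiv.Perm (Fin n)) (r N : ℝ) : Prop :=
  ∀ t i, r * w t ≤ m (σ t) * w i + N * ∑ u ∈ (Iio i).erase t, (w u - w i)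

namespace RankedRowBounds

theorem mul_sub_le_of_pos (hrow : RankedRowBounds m w σ r N) (hm : Antitone m)
    (hw : Antitone w) (hr : 0 ≤ r) (hN : 0 ≤ N) {i : Fin n} (hwi : 0 < w i)
    (hri : ((i : ℕ) - 1 : ℝ) * N ≤ r) :
    (r + N) * (r - m i) ≤ N * ∑ k ∈ Iio i, (m k - m i) := by
  set q : ℝ := ((i : ℕ) : ℝ)
  set W := ∑ s ∈ Iio i, w s
  set K := ∑ k ∈ Iio i, m k
  have hcard : (#(Iio i) : ℝ) = q := by rw [Fin.card_Iio]
  have hS : ∑ u ∈ Iio i, (w u - w i) = W - q * w i := by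
    rw [sum_sub_distrib, sum_const, nsmul_eq_mul, hcard]
  have hpivot : r * w i ≤ m i * w i + N * (W - q * w i) := by
    obtain ⟨t, hti, hσt⟩ := σ.exists_le_le_apply i
    calc r * w i ≤ r * w t := mul_le_mul_of_nonneg_left (hw hti) hr
      _ ≤ m (σ t) * w i + N * ∑ u ∈ (Iio i).erase t, (w u - w i) := hrow t i
      _ ≤ m i * w i + N * (W - q * w i) := by
        rw [← hS]
        refine add_le_add (mul_le_mul_of_nonneg_right (hm hσt) hwi.le)
          (mul_le_mul_of_nonneg_left ?_ hN)
        exact sum_le_sum_of_subset_of_nonneg (erase_subset _ _) fun u hu _ =>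
          sub_nonneg.mpr (hw (mem_Iio.mp hu).le)
  have htop : r * W ≤ K * w i + N * ((q - 1) * (W - q * w i)) := by
    have hK : ∑ s ∈ Iio i, m (σ s) ≤ K := by
      simpa only [sum_map, Equiv.coe_toEmbedding] using
        hm.sum_le_sum_Iio (card_map (s := Iio i) σ.toEmbedding)
    calc r * W = ∑ s ∈ Iio i, r * w s := mul_sum ..
      _ ≤ ∑ s ∈ Iio i, (m (σ s) * w i + N * ((W - q * w i) - (w s - w i))) := by
        gcongr with s hs
        rw [← hS, ← sum_erase_eq_sub hs]
        exact hrow s i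
      _ = (∑ s ∈ Iio i, m (σ s)) * w i + N * ((q - 1) * (W - q * w i)) := by
        rw [sum_add_distrib, ← sum_mul, ← mul_sum, sum_sub_distrib, sum_const, hS, nsmul_eq_mul,
          hcard]
        ring
      _ ≤ K * w i + N * ((q - 1) * (W - q * w i)) := by gcongr
  have hsum : ∑ k ∈ Iio i, (m k - m i) = K - q * m i := by
    rw [sum_sub_distrib, sum_const, nsmul_eq_mul, hcard]
  -- `(r - (q - 1) N) · hpivot + N · htop` eliminates `W`
  have key : (r * (r + N)) * w i ≤ ((r - (q - 1) * N) * m i + N * K) * w i := by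
    nlinarith [mul_le_mul_of_nonneg_left hpivot (sub_nonneg.mpr hri),
      mul_le_mul_of_nonneg_left htop hN]
  rw [hsum]
  nlinarith [le_of_mul_le_mul_right key hwi]

theorem pos (hrow : RankedRowBounds m w σ r N) (hw : Antitone w) (hw0 : 0 ≤ w) (hwne : w ≠ 0)
    (hN : 0 ≤ N) {i : Fin n} (hri : ((i : ℕ) - 1 : ℝ) * N < r) : 0 < w i := by
  have hfirst : ∀ j : Fin n, (j : ℕ) = 0 → 0 < w j := by
    intro j hj
    obtain ⟨k, hk⟩ := Function.ne_iff.mp hwne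
    exact ((hw0 k).lt_of_ne' hk).trans_le (hw (Fin.le_def.mpr (by omega)))
  by_contra! hwi
  have hwi0 : w i = 0 := le_antisymm hwi (hw0 i)
  rcases Nat.eq_zero_or_pos i with hi | hi
  · exact hwi.not_gt (hfirst i hi)
  set z : Fin n := ⟨0, i.pos⟩
  have hz : z ∈ Iio i := mem_Iio.mpr (Fin.lt_def.mpr hi)
  have hwz := hfirst z rfl
  have hsum : ∑ u ∈ (Iio i).erase z, (w u - w i) ≤ ((i : ℕ) - 1 : ℝ) * w z := by
    calc ∑ u ∈ (Iio i).erase z, (w u - w i) ≤ #((Iio i).erase z) • w z :=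
          sum_le_card_nsmul _ _ _ fun u _ => by
            rw [hwi0, sub_zero]; exact hw (Fin.le_def.mpr (Nat.zero_le _))
      _ = ((i : ℕ) - 1 : ℝ) * w z := by
          rw [card_erase_of_mem hz, Fin.card_Iio, nsmul_eq_mul, Nat.cast_pred hi]
  have := (hrow z i).trans (add_le_add_right (mul_le_mul_of_nonneg_left hsum hN) _)
  rw [hwi0, mul_zero, zero_add] at this
  nlinarith

theorem mul_sub_le (hrow : RankedRowBounds m w σ r N) (hm : Antitone m) (hw : Antitone w)
    (hw0 : 0 ≤ w) (hwne : w ≠ 0) (hr : 0 ≤ r) (hN : 0 < N) (i : Fin n) :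
    (r + N) * (r - m i) ≤ N * ∑ k ∈ Iio i, (m k - m i) := by
  induction i using WellFoundedLT.induction with
  | ind i ih =>
    by_cases hri : ((i : ℕ) - 1 : ℝ) * N < r
    · exact hrow.mul_sub_le_of_pos hm hw hr hN.le (hrow.pos hw hw0 hwne hN.le hri) hri.le
    · rw [not_lt] at hri
      have hi : 0 < (i : ℕ) := by
        by_contra! hi
        rw [Nat.le_zero.mp hi, Nat.cast_zero] at hri
        linarith
      set j : Fin n := ⟨i - 1, by omega⟩
      have hji : (j : ℕ) + 1 = i := by simp only [j]; omega
      refine mul_sub_le_of_pred hm hji ?_ (ih j (Fin.lt_def.mpr (by omega)))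
      rwa [show ((j : ℕ) : ℝ) = (i : ℕ) - 1 by rw [← hji]; push_cast; ring]

end RankedRowBounds

end Ranked

theorem le_root_of_smul_le_mulVec {n : ℕ} {m : Fin n → ℝ} (hm : Antitone m)
    {C : Matrix (Fin n) (Fin n) ℝ} {N : ℝ} (hN : 0 < N) (hC0 : ∀ j k, 0 ≤ C j k)
    (hCN : ∀ j k, C j k ≤ N) (hCdiag : ∀ j, C j j = 0) (hCrow : ∀ j, ∑ k, C j k = m j)
    {r : ℝ} (hr : 0 ≤ r) {y : Fin n → ℝ} (hy0 : 0 ≤ y) (hy : y ≠ 0) (hCy : r • y ≤ C *ᵥ y)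
    (i : Fin n) :
    r ≤ (m i - N + √((m i + N) ^ 2 + 4 * N * ∑ k ∈ Iio i, (m k - m i))) / 2 := by
  apply le_root_of_mul_sub_le
  set σ := Tuple.sort (OrderDual.toDual ∘ y)
  have hw : Antitone (y ∘ σ) := monotone_toDual_comp_iff.mp (Tuple.monotone_sort _)
  have hwne : y ∘ σ ≠ 0 := fun h => hy (by ext k; simpa using congrFun h (σ.symm k))
  have hrow : RankedRowBounds m (y ∘ σ) σ r N := fun t i =>
    calc r * y (σ t) ≤ ∑ k, C (σ t) k * y k := hCy (σ t)
      _ = ∑ u, C (σ t) (σ u) * y (σ u) := (Equiv.sum_comp σ fun k => C (σ t) k * y k).symm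
      _ ≤ (∑ u, C (σ t) (σ u)) * y (σ i) + N * ∑ u ∈ (Iio i).erase t, (y (σ u) - y (σ i)) :=
          sum_mul_le_of_antitone hw (fun u => hC0 (σ t) (σ u)) (fun u => hCN (σ t) (σ u))
            (hCdiag (σ t)) i
      _ = m (σ t) * y (σ i) + N * ∑ u ∈ (Iio i).erase t, (y (σ u) - y (σ i)) := by
          rw [Equiv.sum_comp σ (C (σ t)), hCrow]
  exact hrow.mul_sub_le hm hw (fun t => hy0 (σ t)) hwne hr hN i

namespace SimpleGraph

variable {V : Type*} [Fintype V] (G : SimpleGraph V) [DecidableRel G.Adj] (α : ℝ)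

/-- `D⁻ᵅ A Dᵅ`, for `A` the adjacency matrix and `D` the diagonal degree matrix. -/
noncomputable def degreeRatioMatrix : Matrix V V ℝ :=
  of fun i j => G.adjMatrix ℝ i j * ((G.degree j : ℝ) ^ α / (G.degree i : ℝ) ^ α)

theorem degreeRatioMatrix_nonneg (i j : V) : 0 ≤ G.degreeRatioMatrix α i j := by
  unfold degreeRatioMatrix
  rw [of_apply, adjMatrix_apply]
  split_ifs <;> positivity

theorem degreeRatioMatrix_self (i : V) : G.degreeRatioMatrix α i i = 0 := by
  simp [degreeRatioMatrix]

theorem degreeRatioMatrix_le {N : ℝ} (hN0 : 0 ≤ N)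
    (hN : ∀ i j, G.Adj i j → (G.degree j : ℝ) ^ α / (G.degree i : ℝ) ^ α ≤ N) (i j : V) :
    G.degreeRatioMatrix α i j ≤ N := by
  unfold degreeRatioMatrix
  rw [of_apply, adjMatrix_apply]
  split_ifs with h
  · rw [one_mul]; exact hN i j h
  · rwa [zero_mul]

theorem sum_degreeRatioMatrix (i : V) :
    ∑ j, G.degreeRatioMatrix α i j
      = (∑ j ∈ G.neighborFinset i, (G.degree j : ℝ) ^ α) / (G.degree i : ℝ) ^ α := by
  simp only [degreeRatioMatrix, of_apply, adjMatrix_apply, ite_mul, one_mul, zero_mul,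
    ← sum_filter, sum_div]
  congr 1
  ext j
  simp

theorem smul_le_degreeRatioMatrix_mulVec (hd : ∀ i, 0 < (G.degree i : ℝ) ^ α) {μ : ℂ}
    {v : V → ℂ} (h : (G.adjMatrix ℝ).map Complex.ofReal *ᵥ v = μ • v) :
    ‖μ‖ • (fun i => ‖v i‖ / (G.degree i : ℝ) ^ α)
      ≤ G.degreeRatioMatrix α *ᵥ fun i => ‖v i‖ / (G.degree i : ℝ) ^ α := by
  intro i
  have hA := norm_smul_le_mulVec_norm
    (fun a b => by rw [adjMatrix_apply]; split_ifs <;> norm_num) h i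
  calc ‖μ‖ * (‖v i‖ / (G.degree i : ℝ) ^ α) = ‖μ‖ * ‖v i‖ / (G.degree i : ℝ) ^ α := by ring
    _ ≤ (∑ j, G.adjMatrix ℝ i j * ‖v j‖) / (G.degree i : ℝ) ^ α := by gcongr; exact hA
    _ = ∑ j, G.degreeRatioMatrix α i j * (‖v j‖ / (G.degree j : ℝ) ^ α) := by
        rw [sum_div]
        refine sum_congr rfl fun j _ => ?_
        simp only [degreeRatioMatrix, of_apply]
        field_simp [(hd i).ne', (hd j).ne']

end SimpleGraph

theorem stmt_8 {n : ℕ} (hn : 2 ≤ n) (G : SimpleGraph (Fin n)) [DecidableRel G.Adj]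
    (hconn : G.Connected) (α : ℝ)
    (m : Fin n → ℝ)
    (hm : ∀ i, m i = (∑ j ∈ G.neighborFinset i, (G.degree j : ℝ) ^ α) / (G.degree i : ℝ) ^ α)
    (hord : ∀ i j : Fin n, i ≤ j → m j ≤ m i)
    (N : ℝ) (hN : IsGreatest {x | ∃ i j, G.Adj i j ∧ x = (G.degree j : ℝ) ^ α / (G.degree i : ℝ) ^ α} N) :
    ∀ i : Fin n, specRad (G.adjMatrix ℝ) ≤
      (m i - N +
        Real.sqrt ((m i + N) ^ 2 + 4 * N * ∑ k ∈ Finset.Iio i, (m k - m i))) / 2 := by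
  intro i
  have : Nontrivial (Fin n) := Fin.nontrivial_iff_two_le.mpr hn
  have hd (k : Fin n) : 0 < (G.degree k : ℝ) ^ α :=
    rpow_pos_of_pos (Nat.cast_pos.mpr (hconn.preconnected.degree_pos_of_nontrivial k)) α
  have hN0 : 0 < N := by
    obtain ⟨a, b, -, rfl⟩ := hN.1
    exact div_pos (hd b) (hd a)
  have hmi : 0 ≤ m i := by rw [hm]; exact div_nonneg (sum_nonneg fun k _ => (hd k).le) (hd i).le
  have hS : 0 ≤ ∑ k ∈ Iio i, (m k - m i) :=
    sum_nonneg fun k hk => sub_nonneg.mpr (hord _ _ (mem_Iio.mp hk).le)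
  refine specRad_le (le_root_of_mul_sub_le (by nlinarith)) fun μ v hv0 hv => ?_
  refine le_root_of_smul_le_mulVec hord hN0 (G.degreeRatioMatrix_nonneg α)
    (G.degreeRatioMatrix_le α hN0.le fun a b hab => hN.2 ⟨a, b, hab, rfl⟩)
    (G.degreeRatioMatrix_self α) (fun j => (G.sum_degreeRatioMatrix α j).trans (hm j).symm)
    (norm_nonneg μ) (fun k => div_nonneg (norm_nonneg _) (hd k).le) (fun h => hv0 ?_)
    (G.smul_le_degreeRatioMatrix_mulVec α hd hv) i
  exact funext fun k => norm_eq_zero.mp <|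
    (div_eq_zero_iff.mp (congrFun h k)).resolve_right (hd k).ne'
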